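/- For x = (z,r) in the upper halfspace ℍ⁵_ℝ and α = [u : v] ∈ ℙ¹_r(A) with u, v ∈ 𝒪, one has d_α(x) = Θ(x)(u,v) / n(𝒪u + 𝒪v), where Θ(x) is the positive definite binary Hamiltonian form with matrix (1/r)[[1,-z],[-z̄, n(z)+r²]]. -/

import Mathlib

open Quaternion

noncomputable section

/-- `A` is a definite quaternion algebra over ℚ, realized as a ℚ-subalgebra of
Hamilton's quaternions: it has dimension 4 over ℚ and spans ℍ over ℝ
(i.e. `A ⊗_ℚ ℝ = ℍ`). -/
def IsDefiniteQuatAlg (A : Subalgebra ℚ (Quaternion ℝ)) : Prop :=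
  Module.finrank ℚ A = 4 ∧ Submodule.span ℝ (A : Set (Quaternion ℝ)) = ⊤

/-- `O` is an order in `A`: a unitary subring of `A` which is a finitely
generated ℤ-module generating `A` as a ℚ-vector space. -/
def IsOrder (A : Subalgebra ℚ (Quaternion ℝ)) (O : Subring (Quaternion ℝ)) : Prop :=
  (O : Set (Quaternion ℝ)) ⊆ (A : Set (Quaternion ℝ)) ∧
  (∃ s : Finset (Quaternion ℝ), AddSubgroup.closure (s : Set (Quaternion ℝ)) = O.toAddSubgroup) ∧
  Submodule.span ℚ (O : Set (Quaternion ℝ)) = Subalgebra.toSubmodule A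

/-- `O` is a maximal order in `A`. -/
def IsMaximalOrder (A : Subalgebra ℚ (Quaternion ℝ)) (O : Subring (Quaternion ℝ)) : Prop :=
  IsOrder A O ∧ ∀ O' : Subring (Quaternion ℝ), IsOrder A O' → O ≤ O' → O' = O

/-- The left fractional ideal `O x + O y` of `O`, as a subset of ℍ. -/
def idSet (O : Subring (Quaternion ℝ)) (x y : Quaternion ℝ) : Set (Quaternion ℝ) :=
  {m | ∃ o₁ ∈ O, ∃ o₂ ∈ O, m = o₁ * x + o₂ * y}

/-- The reduced norm of a (fractional) left ideal of `O`, given as a subset of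
ℍ: the greatest common divisor of the reduced norms of its elements, i.e. the
largest positive real `t` such that every `n(m)`, `m ∈ s`, is an integer
multiple of `t`. -/
def idealNorm (s : Set (Quaternion ℝ)) : ℝ :=
  sSup {t : ℝ | 0 < t ∧ ∀ m ∈ s, ∃ k : ℤ, normSq m = t * k}

/-- The positive definite binary Hamiltonian form `Θ(z,r)` of matrix
`(1/r)·!![1, -z; -z̄, n(z)+r²]`, evaluated at `(u,v)`. -/
def thetaEval (z : Quaternion ℝ) (r : ℝ) (u v : Quaternion ℝ) : ℝ :=
  (normSq u - 2 * (star u * z * v).re + (normSq z + r ^ 2) * normSq v) / r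

/-!
For `v ≠ 0` the identity is a direct computation:
`Θ(z,r)(u,v) = n(v)·(n(z - uv⁻¹) + r²)/r` and `Ou + Ov = (O(uv⁻¹) + O)·v`, and reduced norms of
left ideals are multiplicative under right multiplication. For `v = 0` one needs `n(O) = 1`, i.e.
that reduced norms of elements of an order are integers. An element `o ∈ A` has rational trace
(`4 re o` is the trace of left multiplication, computed in a ℚ-basis of `A`, which is also an
ℝ-basis of ℍ) and hence rational norm, so `o` is a root of `X² - 2 re(o) X + n(o) ∈ ℚ[X]`; when
`o ∉ ℚ` this is its minimal polynomial, whose coefficients are integers by Gauss's lemma since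
`o` is integral over ℤ.
-/

open Polynomial

theorem QuaternionAlgebra.trace_mulLeft {R : Type*} [CommRing R] (c₁ c₂ c₃ : R)
    (x : ℍ[R,c₁,c₂,c₃]) :
    LinearMap.trace R _ (LinearMap.mulLeft R x) = 2 * (2 * x.re + c₂ * x.imI) := by
  rw [LinearMap.trace_eq_matrix_trace R (QuaternionAlgebra.basisOneIJK c₁ c₂ c₃)]
  simp [Matrix.trace, Fin.sum_univ_four, QuaternionAlgebra.basisOneIJK,
    Algebra.leftMulMatrix_eq_repr_mul]
  ring

namespace Quaternion

variable {R : Type*} [CommRing R]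

theorem trace_mulLeft (x : ℍ[R]) :
    LinearMap.trace R ℍ[R] (LinearMap.mulLeft R x) = 4 * x.re :=
  (QuaternionAlgebra.trace_mulLeft (-1 : R) 0 (-1) x).trans (by ring)

theorem aeval_quadratic_re_normSq (x : ℍ[R]) :
    aeval x (X ^ 2 - C (2 * x.re) * X + C (normSq x)) = 0 := by
  ext <;> simp [pow_two, normSq_def', Algebra.algebraMap_eq_smul_one] <;> ring

theorem normSq_mul_sub (z w u : ℍ[R]) :
    normSq (z * w - u) = normSq u - 2 * (star u * z * w).re + normSq z * normSq w := by
  simp [normSq_def']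
  ring

end Quaternion

theorem minpoly.exists_int_coeff_of_isIntegral {B : Type*} [Ring B] [Algebra ℚ B] {x : B}
    (hx : IsIntegral ℤ x) (n : ℕ) : ∃ k : ℤ, (minpoly ℚ x).coeff n = k := by
  have hmonic := minpoly.monic (hx.tower_top (A := ℚ))
  obtain ⟨P, hPmonic, hPx⟩ := hx
  have hdvd : minpoly ℚ x ∣ P.map (algebraMap ℤ ℚ) :=
    minpoly.dvd ℚ x (by rwa [aeval_map_algebraMap])
  obtain ⟨g, hg⟩ := IsIntegrallyClosed.eq_map_mul_C_of_dvd ℚ hPmonic hdvd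
  rw [hmonic.leadingCoeff, map_one, mul_one] at hg
  exact ⟨g.coeff n, by rw [← hg, coeff_map, eq_intCast]⟩

theorem minpoly.eq_of_notMem_range_of_natDegree_eq_two {K B : Type*} [Field K] [Ring B]
    [Nontrivial B] [Algebra K B] {x : B} (hx : x ∉ (algebraMap K B).range) {p : K[X]}
    (hp : p.Monic) (hdeg : p.natDegree = 2) (hpx : Polynomial.aeval x p = 0) : minpoly K x = p := by
  have hint : IsIntegral K x := ⟨p, hp, hpx⟩
  refine (eq_of_monic_of_dvd_of_natDegree_le (minpoly.monic hint) hp (minpoly.dvd K x hpx) ?_).symm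
  exact hdeg ▸ (minpoly.two_le_natDegree_iff hint).2 hx

theorem Subalgebra.coe_eq_sum_repr_smul {A : Subalgebra ℚ ℍ[ℝ]} {ι : Type*} [Fintype ι]
    (b : Module.Basis ι ℚ A) (x : A) :
    (x : ℍ[ℝ]) = ∑ i, (b.repr x i : ℝ) • (b i : ℍ[ℝ]) := by
  conv_lhs => rw [← b.sum_repr x]
  push_cast
  exact Finset.sum_congr rfl fun i _ => (Rat.cast_smul_eq_qsmul ℝ _ _).symm

namespace IsDefiniteQuatAlg

variable {A : Subalgebra ℚ ℍ[ℝ]}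

theorem exists_ratBasis_eq_realBasis (hA : IsDefiniteQuatAlg A) :
    ∃ (b : Module.Basis (Fin 4) ℚ A) (e : Module.Basis (Fin 4) ℝ ℍ[ℝ]), ∀ i, e i = b i := by
  have : FiniteDimensional ℚ A := Module.finite_of_finrank_eq_succ hA.1
  let b := Module.finBasisOfFinrankEq ℚ A hA.1
  have hspan : ⊤ ≤ Submodule.span ℝ (Set.range fun i => (b i : ℍ[ℝ])) := by
    rw [← hA.2]
    refine Submodule.span_le.2 fun x hx => ?_
    rw [show x = ((⟨x, hx⟩ : A) : ℍ[ℝ]) from rfl, Subalgebra.coe_eq_sum_repr_smul b]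
    exact Submodule.sum_mem _ fun i _ => Submodule.smul_mem _ _ (Submodule.subset_span ⟨i, rfl⟩)
  exact ⟨b, basisOfTopLeSpanOfCardEqFinrank _ hspan (by simp [Quaternion.finrank_eq_four]),
    congrFun (coe_basisOfTopLeSpanOfCardEqFinrank _ _ _)⟩

theorem four_mul_re_eq_trace (hA : IsDefiniteQuatAlg A) (a : A) :
    4 * (a : ℍ[ℝ]).re = LinearMap.trace ℚ A (LinearMap.mulLeft ℚ a) := by
  obtain ⟨b, e, he⟩ := hA.exists_ratBasis_eq_realBasis
  have hrepr (x : A) (i : Fin 4) : e.repr x i = b.repr x i := by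
    simp [Subalgebra.coe_eq_sum_repr_smul b x, ← he, Finsupp.single_apply]
  rw [← Quaternion.trace_mulLeft, LinearMap.trace_eq_matrix_trace ℝ e,
    LinearMap.trace_eq_matrix_trace ℚ b, Matrix.trace, Matrix.trace]
  push_cast
  refine Finset.sum_congr rfl fun i _ => ?_
  simp only [Matrix.diag, LinearMap.toMatrix_apply, LinearMap.mulLeft_apply, he]
  exact hrepr (a * b i) i

theorem exists_rat_re (hA : IsDefiniteQuatAlg A) (a : A) : ∃ s : ℚ, (a : ℍ[ℝ]).re = s :=
  ⟨LinearMap.trace ℚ A (LinearMap.mulLeft ℚ a) / 4, by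
    push_cast
    linarith [hA.four_mul_re_eq_trace a]⟩

theorem exists_rat_normSq (hA : IsDefiniteQuatAlg A) (a : A) :
    ∃ t : ℚ, normSq (a : ℍ[ℝ]) = t := by
  obtain ⟨s₁, hs₁⟩ := hA.exists_rat_re a
  obtain ⟨s₂, hs₂⟩ := hA.exists_rat_re (a * a)
  refine ⟨2 * s₁ ^ 2 - s₂, ?_⟩
  have hsq : normSq (a : ℍ[ℝ]) = 2 * (a : ℍ[ℝ]).re ^ 2 - ((a : ℍ[ℝ]) * a).re := by
    simp only [normSq_def', re_mul]
    ring
  rw [hsq, hs₁, ← Subalgebra.coe_mul, hs₂]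
  push_cast
  ring

end IsDefiniteQuatAlg

theorem Quaternion.exists_int_normSq_of_isIntegral {x : ℍ[ℝ]} (hx : IsIntegral ℤ x) {s t : ℚ}
    (hs : x.re = s) (ht : normSq x = t) : ∃ k : ℤ, normSq x = k := by
  obtain ⟨k, hk⟩ := minpoly.exists_int_coeff_of_isIntegral hx 0
  by_cases hrat : x ∈ (algebraMap ℚ ℍ[ℝ]).range
  · obtain ⟨c, rfl⟩ := hrat
    rw [minpoly.eq_X_sub_C] at hk
    refine ⟨k ^ 2, ?_⟩
    simp only [coeff_sub, coeff_X_zero, coeff_C_zero, zero_sub] at hk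
    have hc : c = -k := by linarith
    rw [eq_ratCast, ← coe_ratCast, normSq_coe, hc]
    push_cast
    ring
  · have hroot : aeval x (X ^ 2 - C (2 * s) * X + C t) = 0 := by
      rw [← aeval_map_algebraMap ℝ]
      simpa [hs, ht] using x.aeval_quadratic_re_normSq
    rw [minpoly.eq_of_notMem_range_of_natDegree_eq_two hrat (by monicity!) (by compute_degree!)
      hroot] at hk
    simp only [coeff_add, coeff_sub, coeff_X_pow, OfNat.zero_ne_ofNat, ↓reduceIte, mul_coeff_zero,
      coeff_C_zero, coeff_X_zero, mul_zero, sub_self, zero_add] at hk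
    exact ⟨k, by rw [ht, hk, Rat.cast_intCast]⟩

namespace IsOrder

variable {A : Subalgebra ℚ ℍ[ℝ]} {O : Subring ℍ[ℝ]}

theorem isIntegral (hO : IsOrder A O) {o : ℍ[ℝ]} (ho : o ∈ O) : IsIntegral ℤ o := by
  obtain ⟨s, hs⟩ := hO.2.1
  refine IsIntegral.of_mem_of_fg (subalgebraOfSubring O) ⟨s, ?_⟩ o ho
  apply Submodule.toAddSubgroup_injective
  rw [Submodule.span_int_eq_addSubgroupClosure, hs]
  rfl

theorem exists_int_normSq (hA : IsDefiniteQuatAlg A) (hO : IsOrder A O) {o : ℍ[ℝ]}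
    (ho : o ∈ O) : ∃ k : ℤ, normSq o = k := by
  obtain ⟨s, hs⟩ := hA.exists_rat_re ⟨o, hO.1 ho⟩
  obtain ⟨t, ht⟩ := hA.exists_rat_normSq ⟨o, hO.1 ho⟩
  exact exists_int_normSq_of_isIntegral (hO.isIntegral ho) hs ht

end IsOrder

open scoped Pointwise in
theorem idealNorm_image_mul_right (s : Set ℍ[ℝ]) {c : ℍ[ℝ]} (hc : c ≠ 0) :
    idealNorm ((· * c) '' s) = normSq c * idealNorm s := by
  have hnc : 0 < normSq c := normSq_nonneg.lt_of_ne' (normSq_ne_zero.2 hc)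
  have hdiv : {t : ℝ | 0 < t ∧ ∀ m ∈ (· * c) '' s, ∃ k : ℤ, normSq m = t * k}
      = normSq c • {t : ℝ | 0 < t ∧ ∀ m ∈ s, ∃ k : ℤ, normSq m = t * k} := by
    ext t
    simp only [Set.mem_smul_set, smul_eq_mul, Set.mem_ofPred_eq, Set.forall_mem_image, map_mul]
    constructor
    · rintro ⟨ht, hall⟩
      refine ⟨t / normSq c, ⟨div_pos ht hnc, fun m hm => ?_⟩, by field_simp⟩
      obtain ⟨k, hk⟩ := hall hm
      exact ⟨k, by field_simp; linarith⟩
    · rintro ⟨t, ⟨ht, hall⟩, rfl⟩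
      refine ⟨mul_pos hnc ht, fun m hm => ?_⟩
      obtain ⟨k, hk⟩ := hall m hm
      exact ⟨k, by rw [hk]; ring⟩
  rw [idealNorm, hdiv, Real.sSup_smul_of_nonneg hnc.le, smul_eq_mul, idealNorm]

theorem idealNorm_subring_eq_one (O : Subring ℍ[ℝ]) (h : ∀ o ∈ O, ∃ k : ℤ, normSq o = k) :
    idealNorm O = 1 := by
  refine IsGreatest.csSup_eq ⟨⟨one_pos, fun m hm => ?_⟩, fun t ⟨ht, hall⟩ => ?_⟩
  · obtain ⟨k, hk⟩ := h m hm
    exact ⟨k, by rw [hk, one_mul]⟩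
  · obtain ⟨k, hk⟩ := hall 1 (one_mem O)
    rw [map_one] at hk
    have hk₁ : (1 : ℝ) ≤ k := by
      exact_mod_cast Int.cast_pos.mp (pos_of_mul_pos_right (hk ▸ one_pos) ht.le)
    nlinarith

theorem idSet_eq_image_mul_right (O : Subring ℍ[ℝ]) (u : ℍ[ℝ]) {v : ℍ[ℝ]} (hv : v ≠ 0) :
    idSet O u v = (· * v) '' idSet O (u * v⁻¹) 1 := by
  ext m
  constructor
  · rintro ⟨o₁, h₁, o₂, h₂, rfl⟩
    exact ⟨o₁ * (u * v⁻¹) + o₂ * 1, ⟨o₁, h₁, o₂, h₂, rfl⟩, by simp [add_mul, mul_assoc, hv]⟩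
  · rintro ⟨_, ⟨o₁, h₁, o₂, h₂, rfl⟩, rfl⟩
    exact ⟨o₁, h₁, o₂, h₂, by simp [add_mul, mul_assoc, hv]⟩

theorem idSet_zero_right (O : Subring ℍ[ℝ]) (u : ℍ[ℝ]) :
    idSet O u 0 = (· * u) '' O := by
  ext m
  constructor
  · rintro ⟨o₁, h₁, o₂, -, rfl⟩
    exact ⟨o₁, h₁, by simp⟩
  · rintro ⟨o, ho, rfl⟩
    exact ⟨o, ho, 0, zero_mem _, by simp⟩

theorem thetaEval_eq (z : ℍ[ℝ]) (r : ℝ) (u : ℍ[ℝ]) {v : ℍ[ℝ]} (hv : v ≠ 0) :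
    thetaEval z r u v = (normSq (z - u * v⁻¹) + r ^ 2) * normSq v / r := by
  have h : normSq (z - u * v⁻¹) * normSq v = normSq (z * v - u) := by
    rw [← map_mul, sub_mul, mul_assoc, inv_mul_cancel₀ hv, mul_one]
  rw [thetaEval, add_mul (normSq (z - u * v⁻¹)), h, normSq_mul_sub]
  ring

theorem thetaEval_zero_right (z : ℍ[ℝ]) (r : ℝ) (u : ℍ[ℝ]) :
    thetaEval z r u 0 = normSq u / r := by
  simp [thetaEval]

theorem dist_to_cusp_eq_theta_div_norm_general (A : Subalgebra ℚ (Quaternion ℝ))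
    (O : Subring (Quaternion ℝ)) (hA : IsDefiniteQuatAlg A) (hO : IsMaximalOrder A O)
    (z : Quaternion ℝ) (r : ℝ) (u v : Quaternion ℝ)
    (huv : (u, v) ≠ (0, 0)) :
    (v ≠ 0 →
      (normSq (z - u * v⁻¹) + r ^ 2) / (r * idealNorm (idSet O (u * v⁻¹) 1))
        = thetaEval z r u v / idealNorm (idSet O u v)) ∧
    (v = 0 → 1 / r = thetaEval z r u v / idealNorm (idSet O u v)) := by
  refine ⟨fun hv => ?_, fun hv => ?_⟩
  · have hnv : normSq v ≠ 0 := normSq_ne_zero.2 hv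
    rw [thetaEval_eq z r u hv, idSet_eq_image_mul_right O u hv, idealNorm_image_mul_right _ hv,
      mul_comm (normSq v), mul_div_right_comm, mul_div_mul_right _ _ hnv, div_div]
  · subst hv
    have hu : u ≠ 0 := fun hu => huv (by rw [hu])
    rw [thetaEval_zero_right, idSet_zero_right, idealNorm_image_mul_right _ hu,
      idealNorm_subring_eq_one O fun o ho => hO.1.exists_int_normSq hA ho, mul_one,
      div_right_comm, div_self (normSq_ne_zero.2 hu)]

/-- Proposition 3.3 (2): for `x = (z,r)` in the upper halfspace and
`α = [u : v] ∈ ℙ¹_r(A)` with `u, v ∈ O`, one has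
`d_α(x) = Θ(x)(u,v) / n(Ou + Ov)`, where for `α ∈ A`,
`d_α(z,r) = (n(z-α) + r²)/(r·n(Oα + O))` and `d_∞(z,r) = 1/r`. -/
theorem dist_to_cusp_eq_theta_div_norm (A : Subalgebra ℚ (Quaternion ℝ))
    (O : Subring (Quaternion ℝ)) (hA : IsDefiniteQuatAlg A) (hO : IsMaximalOrder A O)
    (z : Quaternion ℝ) (r : ℝ) (hr : 0 < r) (u v : Quaternion ℝ)
    (hu : u ∈ O) (hv : v ∈ O) (huv : (u, v) ≠ (0, 0)) :
    (v ≠ 0 →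
      (normSq (z - u * v⁻¹) + r ^ 2) / (r * idealNorm (idSet O (u * v⁻¹) 1))
        = thetaEval z r u v / idealNorm (idSet O u v)) ∧
    (v = 0 → 1 / r = thetaEval z r u v / idealNorm (idSet O u v)) :=
  dist_to_cusp_eq_theta_div_norm_general A O hA hO z r u v huv
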